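/- arXiv:1211.5857 — 2 statements merged into one kernel-verified Lean document; each statement's English description precedes it below -/
import Mathlib

section
/- Suppose σ_1 ≤ σ_2 ≤ ⋯ ≤ σ_N with all σ_f > 0, and define φ_k = ∑_{i=1}^k (σ_k − σ_i) for 1 ≤ k ≤ N and φ_{N+1} = ∞. Then for any P_max > 0 there exists a unique index k ∈ {1,…,N} with φ_k < P_max ≤ φ_{k+1}, and the water level t = (P_max + ∑_{i=1}^k σ_i)/k satisfies σ_k < t ≤ σ_{k+1} (with the last inequality vacuous for k = N), so that exactly the first k sub-channels receive positive power max(t − σ_f, 0) > 0. -/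
/-!
Writing `S_k = ∑_{i ≤ k} σ_i`, both ends of the bracket are values of the same affine function
`c ↦ ∑_{i ≤ k} (c - σ_i) = k c - S_k`: `φ_k` is its value at `σ_k` and `φ_{k+1}` its value at
`σ_{k+1}`. Hence `φ_k < P ≤ φ_{k+1}` says exactly `σ_k < t ≤ σ_{k+1}` for `t = (P + S_k) / k`.
The index exists because `φ_1 = 0 < P` (take the largest `k` with `φ_k < P`), and it is unique
because `φ` is monotone.
-/

open Finset

theorem Finset.lt_add_sum_div_card_iff {ι : Type*} {s : Finset ι} (hs : s.Nonempty)
    (σ : ι → ℝ) (P c : ℝ) :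
    c < (P + ∑ i ∈ s, σ i) / #s ↔ ∑ i ∈ s, (c - σ i) < P := by
  rw [lt_div_iff₀ (by exact_mod_cast hs.card_pos), sum_sub_distrib, sum_const, nsmul_eq_mul]
  constructor <;> intro <;> linarith

theorem Finset.add_sum_div_card_le_iff {ι : Type*} {s : Finset ι} (hs : s.Nonempty)
    (σ : ι → ℝ) (P c : ℝ) :
    (P + ∑ i ∈ s, σ i) / #s ≤ c ↔ P ≤ ∑ i ∈ s, (c - σ i) := by
  simpa only [not_lt] using (lt_add_sum_div_card_iff hs σ P c).not

theorem sum_Icc_succ_sub_eq {G : Type*} [AddCommGroup G] (a : ℕ → G) (k : ℕ) :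
    ∑ i ∈ Icc 1 (k + 1), (a (k + 1) - a i) = ∑ i ∈ Icc 1 k, (a (k + 1) - a i) := by
  rw [sum_Icc_succ_top (by omega), sub_self, add_zero]

theorem monotoneOn_sum_Icc_sub {N : ℕ} {σ : ℕ → ℝ} (hσ : MonotoneOn σ (Set.Icc 1 N)) :
    MonotoneOn (fun k => ∑ i ∈ Icc 1 k, (σ k - σ i)) (Set.Icc 1 N) := by
  intro a ha b hb hab
  have hle : ∀ i ∈ Icc 1 b, σ i ≤ σ b := fun i hi =>
    hσ ⟨(mem_Icc.1 hi).1, (mem_Icc.1 hi).2.trans hb.2⟩ hb (mem_Icc.1 hi).2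
  calc ∑ i ∈ Icc 1 a, (σ a - σ i)
      ≤ ∑ i ∈ Icc 1 a, (σ b - σ i) := sum_le_sum fun i _ => by linarith [hσ ha hb hab]
    _ ≤ ∑ i ∈ Icc 1 b, (σ b - σ i) :=
        sum_le_sum_of_subset_of_nonneg (Icc_subset_Icc le_rfl hab)
          fun i hi _ => sub_nonneg.2 (hle i hi)

theorem exists_last_lt {φ : ℕ → ℝ} {N : ℕ} {P : ℝ} (hN : 1 ≤ N) (h1 : φ 1 < P) :
    ∃ k, 1 ≤ k ∧ k ≤ N ∧ φ k < P ∧ (k = N ∨ P ≤ φ (k + 1)) := by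
  refine ⟨Nat.findGreatest (φ · < P) N, Nat.le_findGreatest hN h1, Nat.findGreatest_le N,
    Nat.findGreatest_spec (P := (φ · < P)) hN h1, ?_⟩
  refine (Nat.findGreatest_le N).eq_or_lt.imp_right fun hlt => ?_
  exact not_lt.1 (Nat.findGreatest_is_greatest (Nat.lt_succ_self _) hlt)

theorem MonotoneOn.le_of_apply_lt_of_le_apply_succ {φ : ℕ → ℝ} {N k k' : ℕ} {P : ℝ}
    (hφ : MonotoneOn φ (Set.Icc 1 N)) (hk : 1 ≤ k) (hk' : k' ≤ N) (hlt : φ k' < P)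
    (hge : k = N ∨ P ≤ φ (k + 1)) : k' ≤ k := by
  by_contra! hkk'
  have hP : P ≤ φ (k + 1) := hge.resolve_left (by omega)
  have hφle : φ (k + 1) ≤ φ k' := hφ ⟨by omega, by omega⟩ ⟨by omega, hk'⟩ hkk'
  linarith

theorem stmt_8_general (N : ℕ) (hN : 0 < N) (σ : ℕ → ℝ)
    (hmono : ∀ i j, 1 ≤ i → i ≤ j → j ≤ N → σ i ≤ σ j)
    (φ : ℕ → ℝ)
    (hφ : ∀ k, 1 ≤ k → k ≤ N → φ k = ∑ i ∈ Finset.Icc 1 k, (σ k - σ i))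
    (Pmax : ℝ) (hPmax : 0 < Pmax) :
    ∃! k : ℕ, 1 ≤ k ∧ k ≤ N ∧ φ k < Pmax ∧ (k = N ∨ Pmax ≤ φ (k + 1)) ∧
      (let t := (Pmax + ∑ i ∈ Finset.Icc 1 k, σ i) / k
       σ k < t ∧ (k = N ∨ t ≤ σ (k + 1)) ∧
         (∀ f, 1 ≤ f → f ≤ k → 0 < max (t - σ f) 0) ∧
         (∀ f, k < f → f ≤ N → max (t - σ f) 0 = 0)) := by
  have hσ : MonotoneOn σ (Set.Icc 1 N) := fun i hi j hj hij => hmono i j hi.1 hij hj.2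
  have hφmono : MonotoneOn φ (Set.Icc 1 N) :=
    (monotoneOn_sum_Icc_sub hσ).congr fun k hk => (hφ k hk.1 hk.2).symm
  obtain ⟨k, hk1, hkN, hlt, hge⟩ :=
    exists_last_lt (φ := φ) hN (by simpa [hφ 1 le_rfl hN] using hPmax)
  refine ⟨k, ⟨hk1, hkN, hlt, hge, ?_⟩, fun k' ⟨hk'1, hk'N, hlt', hge', _⟩ =>
    le_antisymm (hφmono.le_of_apply_lt_of_le_apply_succ hk1 hk'N hlt' hge)
      (hφmono.le_of_apply_lt_of_le_apply_succ hk'1 hkN hlt hge')⟩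
  intro t
  have hIcc : (Icc 1 k).Nonempty := nonempty_Icc.2 hk1
  have ht : t = (Pmax + ∑ i ∈ Icc 1 k, σ i) / #(Icc 1 k) := by simp [t]
  have hσk : σ k < t := ht ▸ (lt_add_sum_div_card_iff hIcc σ Pmax _).2 (hφ k hk1 hkN ▸ hlt)
  have htσ : k = N ∨ t ≤ σ (k + 1) := by
    refine hkN.eq_or_lt.imp_right fun hkltN => ht ▸ (add_sum_div_card_le_iff hIcc σ Pmax _).2 ?_
    rw [← sum_Icc_succ_sub_eq, ← hφ (k + 1) (by omega) hkltN]
    exact hge.resolve_left hkltN.ne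
  refine ⟨hσk, htσ, fun f hf1 hfk => ?_, fun f hkf hfN => ?_⟩
  · exact lt_max_of_lt_left (sub_pos.2 ((hmono f k hf1 hfk hkN).trans_lt hσk))
  · have := hmono (k + 1) f (by omega) hkf hfN
    exact max_eq_right (sub_nonpos.2 ((htσ.resolve_left (by omega)).trans this))

theorem stmt_8 (N : ℕ) (hN : 0 < N) (σ : ℕ → ℝ)
    (hpos : ∀ i, 1 ≤ i → i ≤ N → 0 < σ i)
    (hmono : ∀ i j, 1 ≤ i → i ≤ j → j ≤ N → σ i ≤ σ j)
    (φ : ℕ → ℝ)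
    (hφ : ∀ k, 1 ≤ k → k ≤ N → φ k = ∑ i ∈ Finset.Icc 1 k, (σ k - σ i))
    (Pmax : ℝ) (hPmax : 0 < Pmax) :
    ∃! k : ℕ, 1 ≤ k ∧ k ≤ N ∧ φ k < Pmax ∧ (k = N ∨ Pmax ≤ φ (k + 1)) ∧
      (let t := (Pmax + ∑ i ∈ Finset.Icc 1 k, σ i) / k
       σ k < t ∧ (k = N ∨ t ≤ σ (k + 1)) ∧
         (∀ f, 1 ≤ f → f ≤ k → 0 < max (t - σ f) 0) ∧
         (∀ f, k < f → f ≤ N → max (t - σ f) 0 = 0)) :=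
  stmt_8_general N hN σ hmono φ hφ Pmax hPmax
end

section
/- In the perfectly symmetric two-user game restricted to the first k_2 channels, the closed-form water levels satisfy the power budget with equality: if t_2* = [(1+c)P_3^max + ∑_{i=1}^{k_2} σ_i]/k_2 and P_3^f = (t_2* − σ_f)/(1+c) for f ≤ k_2, 0 otherwise, where σ_1 ≤ ⋯ ≤ σ_N and k_2 satisfies φ_{k_2} < P_3^max ≤ φ_{k_2+1} with φ_k = (1/(1+c))∑_{i=1}^k(σ_k − σ_i), then ∑_{f=1}^N P_3^f = P_3^max and P_3^f ≥ 0 for all f. -/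
/-!
The level `t₂` is exactly the one at which the `k₂` active channels, filled up to `t₂`, use the
whole budget `(1 + c) P`. The inequality `φ_{k₂} < P` says that filling every active channel up to
the largest active noise `σ_{k₂}` costs less than the budget, so `t₂ ≥ σ_{k₂} ≥ σ_f` for every
active channel `f`.
-/

open Finset

/-- The common level `t` with `∑ i ∈ s, (t - σ i) = a * P`. -/
noncomputable def waterLevel (a P : ℝ) (σ : ℕ → ℝ) (s : Finset ℕ) : ℝ :=
  (a * P + ∑ i ∈ s, σ i) / #s

theorem sum_waterLevel_sub_div {a P : ℝ} (σ : ℕ → ℝ) {s : Finset ℕ} (hs : s.Nonempty)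
    (ha : a ≠ 0) : ∑ i ∈ s, (waterLevel a P σ s - σ i) / a = P := by
  have hcard : (#s : ℝ) ≠ 0 := by exact_mod_cast hs.card_pos.ne'
  rw [← sum_div, sum_sub_distrib, sum_const, nsmul_eq_mul, waterLevel,
    mul_div_cancel₀ _ hcard, add_sub_cancel_right, mul_div_cancel_left₀ _ ha]

theorem le_waterLevel {a P x : ℝ} {σ : ℕ → ℝ} {s : Finset ℕ} (ha : 0 < a) (hs : s.Nonempty)
    (h : 1 / a * ∑ i ∈ s, (x - σ i) < P) : x ≤ waterLevel a P σ s := by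
  rw [one_div, inv_mul_lt_iff₀ ha, sum_sub_distrib, sum_const, nsmul_eq_mul] at h
  rw [waterLevel, le_div_iff₀ (by exact_mod_cast hs.card_pos)]
  linarith

theorem sum_Icc_ite_le {M : Type*} [AddCommMonoid M] (g : ℕ → M) {a k n : ℕ} (hk : k ≤ n) :
    ∑ f ∈ Icc a n, (if f ≤ k then g f else 0) = ∑ f ∈ Icc a k, g f := by
  rw [← sum_filter]
  congr 1
  ext f
  simp only [mem_filter, mem_Icc]
  omega

theorem stmt_9_general (N : ℕ) (σ : ℕ → ℝ)
    (hmono : ∀ i j, 1 ≤ i → i ≤ j → j ≤ N → σ i ≤ σ j)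
    (c : ℝ) (hc : 0 < c)
    (P3max : ℝ)
    (φ : ℕ → ℝ)
    (hφ : ∀ k, 1 ≤ k → k ≤ N →
      φ k = (1 / (1 + c)) * ∑ i ∈ Finset.Icc 1 k, (σ k - σ i))
    (k2 : ℕ) (hk2l : 1 ≤ k2) (hk2u : k2 ≤ N)
    (hlow : φ k2 < P3max)
    (t2 : ℝ) (ht2 : t2 = ((1 + c) * P3max + ∑ i ∈ Finset.Icc 1 k2, σ i) / k2)
    (P : ℕ → ℝ)
    (hP : ∀ f, P f = if f ≤ k2 then (t2 - σ f) / (1 + c) else 0) :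
    (∑ f ∈ Finset.Icc 1 N, P f = P3max) ∧ ∀ f, 1 ≤ f → f ≤ N → 0 ≤ P f := by
  have hc0 : 0 < 1 + c := add_pos one_pos hc
  have hs : (Icc 1 k2).Nonempty := nonempty_Icc.2 hk2l
  have ht2_eq : t2 = waterLevel (1 + c) P3max σ (Icc 1 k2) := by
    rw [ht2, waterLevel, Nat.card_Icc, Nat.add_sub_cancel]
  have hlevel : σ k2 ≤ t2 :=
    ht2_eq ▸ le_waterLevel hc0 hs (hφ k2 hk2l hk2u ▸ hlow)
  refine ⟨?_, fun f hf1 hfN => ?_⟩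
  · simp_rw [hP]
    rw [sum_Icc_ite_le _ hk2u, ht2_eq]
    exact sum_waterLevel_sub_div σ hs hc0.ne'
  · rw [hP]
    split_ifs with hf
    · exact div_nonneg (by linarith [hmono f k2 hf1 hf hk2u]) hc0.le
    · rfl

theorem stmt_9 (N : ℕ) (hN : 0 < N) (σ : ℕ → ℝ)
    (hpos : ∀ i, 1 ≤ i → i ≤ N → 0 < σ i)
    (hmono : ∀ i j, 1 ≤ i → i ≤ j → j ≤ N → σ i ≤ σ j)
    (c : ℝ) (hc : 0 < c) (hc1 : c < 1)
    (P3max : ℝ) (hP3 : 0 < P3max)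
    (φ : ℕ → ℝ)
    (hφ : ∀ k, 1 ≤ k → k ≤ N →
      φ k = (1 / (1 + c)) * ∑ i ∈ Finset.Icc 1 k, (σ k - σ i))
    (k2 : ℕ) (hk2l : 1 ≤ k2) (hk2u : k2 ≤ N)
    (hlow : φ k2 < P3max) (hhigh : k2 = N ∨ P3max ≤ φ (k2 + 1))
    (t2 : ℝ) (ht2 : t2 = ((1 + c) * P3max + ∑ i ∈ Finset.Icc 1 k2, σ i) / k2)
    (P : ℕ → ℝ)
    (hP : ∀ f, P f = if f ≤ k2 then (t2 - σ f) / (1 + c) else 0) :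
    (∑ f ∈ Finset.Icc 1 N, P f = P3max) ∧ ∀ f, 1 ≤ f → f ≤ N → 0 ≤ P f :=
  stmt_9_general N σ hmono c hc P3max φ hφ k2 hk2l hk2u hlow t2 ht2 P hP
end
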